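/- arXiv:2303.09961 — 2 statements merged into one kernel-verified Lean document; each statement's English description precedes it below -/
import Mathlib

section
/- Let (φ_t) be a non-elliptic semigroup in 𝔻 with Denjoy–Wolff point τ ∈ ∂𝔻 and Koenigs function h, and let Δ be a parabolic petal of (φ_t), i.e., h(Δ) is a maximal horizontal half-plane in Ω = h(𝔻). Fix z ∈ Δ and let η : (−1,1) → 𝔻 be a geodesic of 𝔻 with η(0) = z and lim_{r→1⁻} η(r) = τ. Then lim_{t→−∞} v^o_Δ(t)/t = 0 and lim_{t→−∞} v^T_Δ(t)/t = 0, where v^o_Δ(t) := d_𝔻(z, π_η(φ_t(z))) and v^T_Δ(t) := inf_{r ∈ (−1,1)} d_𝔻(φ_t(z), η(r)) for t ≤ 0. -/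
open Filter Set

/-- The inverse hyperbolic tangent. -/
noncomputable def arctanh (x : ℝ) : ℝ := (1 / 2) * Real.log ((1 + x) / (1 - x))

/-- The hyperbolic distance of the unit disc:
`d_𝔻(z, w) = arctanh |(z - w)/(1 - conj z · w)|`. -/
noncomputable def dD (z w : ℂ) : ℝ :=
  arctanh ‖(z - w) / (1 - (starRingEnd ℂ) z * w)‖

def unitDisc : Set ℂ := {z : ℂ | ‖z‖ < 1}

/-- A one-parameter semigroup of holomorphic self-maps of the unit disc
(which is not a group): `φ 0 = id`, the semigroup property holds for
nonnegative times, and `φ t → id` locally uniformly as `t → 0⁺`. -/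
structure IsSemigroupD (φ : ℝ → ℂ → ℂ) : Prop where
  mapsTo : ∀ t : ℝ, 0 ≤ t → Set.MapsTo (φ t) unitDisc unitDisc
  holo : ∀ t : ℝ, 0 ≤ t → DifferentiableOn ℂ (φ t) unitDisc
  id0 : ∀ z ∈ unitDisc, φ 0 z = z
  comp : ∀ s t : ℝ, 0 ≤ s → 0 ≤ t → ∀ z ∈ unitDisc, φ (s + t) z = φ s (φ t z)
  cont0 : TendstoLocallyUniformlyOn (fun t : ℝ => φ t) id (nhdsWithin 0 (Set.Ioi 0)) unitDisc
  notGroup : ∃ t : ℝ, 0 < t ∧ ¬ Set.BijOn (φ t) unitDisc unitDisc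

/-- The backward invariant set `W = ⋂_{t ≥ 0} φ_t(𝔻)`. -/
def backwardInvSet (φ : ℝ → ℂ → ℂ) : Set ℂ :=
  ⋂ t ∈ Set.Ici (0 : ℝ), φ t '' unitDisc

/-- A petal: a nonempty connected component of the interior of the backward invariant set. -/
def IsPetal (φ : ℝ → ℂ → ℂ) (Δ : Set ℂ) : Prop :=
  Δ.Nonempty ∧ ∃ z ∈ interior (backwardInvSet φ),
    Δ = connectedComponentIn (interior (backwardInvSet φ)) z

/-- A geodesic of the unit disc, parametrized by `(-1, 1)`. -/
structure IsGeodesicD (η : ℝ → ℂ) : Prop where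
  mem : ∀ r ∈ Set.Ioo (-1 : ℝ) 1, η r ∈ unitDisc
  cont : ContinuousOn η (Set.Ioo (-1 : ℝ) 1)
  inj : Set.InjOn η (Set.Ioo (-1 : ℝ) 1)
  geo : ∀ r₁ r₂ r₃ : ℝ, -1 < r₁ → r₁ ≤ r₂ → r₂ ≤ r₃ → r₃ < 1 →
    dD (η r₁) (η r₃) = dD (η r₁) (η r₂) + dD (η r₂) (η r₃)
  endPlus : ∃ b : ℂ, ‖b‖ = 1 ∧
    Filter.Tendsto η (nhdsWithin 1 (Set.Iio 1)) (nhds b)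
  endMinus : ∃ a : ℂ, ‖a‖ = 1 ∧
    Filter.Tendsto η (nhdsWithin (-1) (Set.Ioi (-1))) (nhds a)

/-- `inf_{r ∈ (-1,1)} d_𝔻(u, η r)`, the hyperbolic distance from `u` to the geodesic `η`. -/
noncomputable def geoDist (η : ℝ → ℂ) (u : ℂ) : ℝ :=
  ⨅ r : Set.Ioo (-1 : ℝ) 1, dD u (η r.1)

/-- `p` is a projection `π_η(u)` of `u` onto the geodesic `η`. -/
def IsProj (η : ℝ → ℂ) (u p : ℂ) : Prop :=
  (∃ r ∈ Set.Ioo (-1 : ℝ) 1, p = η r) ∧ dD u p = geoDist η u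

/-- `τ ∈ ∂𝔻` is the Denjoy–Wolff point of `φ` (non-elliptic case). -/
def IsDenjoyWolffBoundary (φ : ℝ → ℂ → ℂ) (τ : ℂ) : Prop :=
  ‖τ‖ = 1 ∧ ∀ z ∈ unitDisc, Filter.Tendsto (fun t => φ t z) Filter.atTop (nhds τ)

/-- The Koenigs function of a non-elliptic semigroup. -/
structure IsKoenigsNE (φ : ℝ → ℂ → ℂ) (h : ℂ → ℂ) : Prop where
  holo : DifferentiableOn ℂ h unitDisc
  inj : Set.InjOn h unitDisc
  zero : h 0 = 0
  semiconj : ∀ t : ℝ, 0 ≤ t → ∀ z ∈ unitDisc, h (φ t z) = h z + (t : ℂ)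

/-- A horizontal half-plane `{Im z > a}` or `{Im z < a}`. -/
def IsHorizHalfPlane (H : Set ℂ) : Prop :=
  ∃ a : ℝ, H = {z : ℂ | a < z.im} ∨ H = {z : ℂ | z.im < a}

/-- `Δ` is a parabolic petal: a petal whose image `h(Δ)` is a maximal horizontal
half-plane contained in `Ω = h(𝔻)`. -/
def IsParabolicPetal (φ : ℝ → ℂ → ℂ) (h : ℂ → ℂ) (Δ : Set ℂ) : Prop :=
  IsPetal φ Δ ∧ IsHorizHalfPlane (h '' Δ) ∧ h '' Δ ⊆ h '' unitDisc ∧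
  ∀ H : Set ℂ, IsHorizHalfPlane H → h '' Δ ⊂ H → ¬ H ⊆ h '' unitDisc

/-!
On a parabolic petal the Koenigs function `h` maps `Δ` biholomorphically onto a half-plane
`{Im w > a}` or `{Im w < a}` and conjugates `φ_t` to `w ↦ w + t`. Composing `h⁻¹` with a Möbius
map of the disc onto this half-plane sending `0` to `h z` gives a holomorphic self-map of the disc,
so by Schwarz–Pick `d_𝔻(z, φ_t z)` is at most the hyperbolic distance of `h z` and `h z + t` in
the half-plane, which is `O(log |t|)`. Since `z = η 0`, `v^T_Δ(t) ≤ d_𝔻(z, φ_t z)`, and by the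
triangle inequality `v^o_Δ(t) ≤ d_𝔻(z, φ_t z) + v^T_Δ(t)`; both are therefore `o(|t|)`.
-/

open Complex Metric Topology Filter Function Asymptotics
open scoped UpperHalfPlane ComplexConjugate

lemma unitDisc_eq_ball : unitDisc = ball (0 : ℂ) 1 := by
  ext z; simp [unitDisc]

lemma ne_one_of_mem_unitDisc {z : ℂ} (hz : z ∈ unitDisc) : z ≠ 1 := by
  rintro rfl; simp [unitDisc] at hz

lemma arctanh_eq_artanh {x : ℝ} (hx : x ∈ Icc (-1) 1) : arctanh x = Real.artanh x :=
  (Real.artanh_eq_half_log hx).symm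

lemma arctanh_le_arctanh {x y : ℝ} (hx : 0 ≤ x) (hxy : x ≤ y) (hy : y < 1) :
    arctanh x ≤ arctanh y := by
  rw [arctanh_eq_artanh ⟨by linarith, by linarith⟩, arctanh_eq_artanh ⟨by linarith, hy.le⟩]
  exact Real.artanh_le_artanh (by linarith) hy hxy

/-- A Möbius map of the disc onto the half-plane `{Im w > w₀.im - y}` (for `y > 0`; `<` for
`y < 0`) with `0 ↦ w₀`; for `w₀ = I`, `y = 1` it is the Cayley transform
`z ↦ I (1 + z) / (1 - z)`. -/
noncomputable def halfPlaneCayley (w₀ : ℂ) (y : ℝ) (u : ℂ) : ℂ := w₀ + 2 * y * I * u / (1 - u)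

lemma halfPlaneCayley_im (w₀ : ℂ) (y : ℝ) {u : ℂ} (hu : u ∈ unitDisc) :
    ∃ q > 0, (halfPlaneCayley w₀ y u).im = w₀.im - y + y * q := by
  have hu1 := ne_one_of_mem_unitDisc hu
  have hu' : ‖u‖ < 1 := hu
  refine ⟨(1 - ‖u‖ ^ 2) / ‖1 - u‖ ^ 2, ?_, ?_⟩
  · have : 0 < ‖1 - u‖ := norm_pos_iff.2 (sub_ne_zero.2 hu1.symm)
    have : 0 < 1 - ‖u‖ ^ 2 := by nlinarith [norm_nonneg u]
    positivity
  have h : normSq (1 - u) ≠ 0 := normSq_eq_zero.not.2 (sub_ne_zero.2 hu1.symm)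
  simp only [halfPlaneCayley, add_im, div_im, Complex.sq_norm, mul_im, mul_re,
    ofReal_re, ofReal_im, I_re, I_im, sub_re, sub_im, one_re, one_im, re_ofNat, im_ofNat]
  field_simp
  simp only [normSq_apply, sub_re, sub_im, one_re, one_im]
  ring

lemma halfPlaneCayley_zero (w₀ : ℂ) (y : ℝ) : halfPlaneCayley w₀ y 0 = w₀ := by
  simp [halfPlaneCayley]

lemma halfPlaneCayley_div (w₀ : ℂ) {y : ℝ} (hy : y ≠ 0) (t : ℝ) :
    halfPlaneCayley w₀ y (t / (t + (2 * y : ℝ) * I)) = w₀ + t := by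
  have h : (t : ℂ) + (2 * y : ℝ) * I ≠ 0 := by
    intro h0
    have := congrArg Complex.im h0
    simp only [add_im, ofReal_im, mul_im, ofReal_re, I_im, I_re, mul_zero, zero_add, mul_one,
      zero_im] at this
    exact hy (by linarith)
  have hy' : (y : ℂ) ≠ 0 := ofReal_ne_zero.2 hy
  rw [halfPlaneCayley]
  push_cast at h ⊢
  field_simp
  ring

lemma differentiableAt_halfPlaneCayley (w₀ : ℂ) (y : ℝ) {u : ℂ} (hu : u ≠ 1) :
    DifferentiableAt ℂ (halfPlaneCayley w₀ y) u := by
  unfold halfPlaneCayley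
  fun_prop (disch := exact sub_ne_zero.2 hu.symm)

lemma halfPlaneCayley_mem {a : ℝ} {H : Set ℂ} (hH : H = {w | a < w.im} ∨ H = {w | w.im < a})
    {w₀ : ℂ} (hw₀ : w₀ ∈ H) {u : ℂ} (hu : u ∈ unitDisc) :
    halfPlaneCayley w₀ (w₀.im - a) u ∈ H := by
  obtain ⟨q, hq, him⟩ := halfPlaneCayley_im w₀ (w₀.im - a) hu
  rcases hH with rfl | rfl
  · show a < _; rw [him]; have : a < w₀.im := hw₀; nlinarith
  · show _ < a; rw [him]; have : w₀.im < a := hw₀; nlinarith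

lemma halfPlaneCayley_I_im_pos {z : ℂ} (hz : z ∈ unitDisc) : 0 < (halfPlaneCayley I 1 z).im := by
  obtain ⟨q, hq, him⟩ := halfPlaneCayley_im I 1 hz
  simpa [him] using hq

noncomputable def unitDisc.toUpperHalfPlane {z : ℂ} (hz : z ∈ unitDisc) : ℍ :=
  ⟨halfPlaneCayley I 1 z, halfPlaneCayley_I_im_pos hz⟩

lemma coe_toUpperHalfPlane {z : ℂ} (hz : z ∈ unitDisc) :
    (unitDisc.toUpperHalfPlane hz : ℂ) = halfPlaneCayley I 1 z := rfl

lemma norm_mobius_eq_tanh_half_dist {z w : ℂ} (hz : z ∈ unitDisc) (hw : w ∈ unitDisc) :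
    ‖(z - w) / (1 - conj z * w)‖ =
      Real.tanh (dist (unitDisc.toUpperHalfPlane hz) (unitDisc.toUpperHalfPlane hw) / 2) := by
  have hz1 : 1 - z ≠ 0 := sub_ne_zero.2 (ne_one_of_mem_unitDisc hz).symm
  have hw1 : 1 - w ≠ 0 := sub_ne_zero.2 (ne_one_of_mem_unitDisc hw).symm
  have hw1' : 1 - conj w ≠ 0 := by
    rw [← map_one (starRingEnd ℂ), ← map_sub]; exact (map_ne_zero _).2 hw1
  have hsub : halfPlaneCayley I 1 z - halfPlaneCayley I 1 w =
      2 * I * (z - w) / ((1 - z) * (1 - w)) := by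
    simp only [halfPlaneCayley, ofReal_one]; field_simp; ring
  have hsub_conj : halfPlaneCayley I 1 z - conj (halfPlaneCayley I 1 w) =
      2 * I * (1 - z * conj w) / ((1 - z) * (1 - conj w)) := by
    simp only [halfPlaneCayley, map_add, map_div₀, map_mul, map_sub, map_one, conj_I, ofReal_one,
      map_ofNat]
    field_simp; ring
  have hnorm_conj : ‖1 - conj w‖ = ‖1 - w‖ := by
    rw [← norm_conj, map_sub, map_one, conj_conj]
  have hnorm_conj' : ‖1 - z * conj w‖ = ‖1 - conj z * w‖ := by
    rw [← norm_conj, map_sub, map_one, map_mul, conj_conj, mul_comm]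
  rw [UpperHalfPlane.tanh_half_dist, coe_toUpperHalfPlane, coe_toUpperHalfPlane, dist_eq, dist_eq,
    hsub, hsub_conj]
  simp only [norm_div, norm_mul, hnorm_conj, hnorm_conj']
  have : ‖1 - w‖ ≠ 0 := norm_ne_zero_iff.2 hw1
  have : ‖1 - z‖ ≠ 0 := norm_ne_zero_iff.2 hz1
  have : ‖(2 : ℂ) * I‖ ≠ 0 := by simp
  field_simp

lemma dD_eq_half_dist {z w : ℂ} (hz : z ∈ unitDisc) (hw : w ∈ unitDisc) :
    dD z w = dist (unitDisc.toUpperHalfPlane hz) (unitDisc.toUpperHalfPlane hw) / 2 := by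
  rw [dD, norm_mobius_eq_tanh_half_dist hz hw,
    arctanh_eq_artanh ⟨(Real.neg_one_lt_tanh _).le, (Real.tanh_lt_one _).le⟩, Real.artanh_tanh]

lemma dD_nonneg {z w : ℂ} (hz : z ∈ unitDisc) (hw : w ∈ unitDisc) : 0 ≤ dD z w := by
  rw [dD_eq_half_dist hz hw]; positivity

lemma dD_comm {z w : ℂ} (hz : z ∈ unitDisc) (hw : w ∈ unitDisc) : dD z w = dD w z := by
  rw [dD_eq_half_dist hz hw, dD_eq_half_dist hw hz, dist_comm]

lemma dD_triangle {z w v : ℂ} (hz : z ∈ unitDisc) (hw : w ∈ unitDisc) (hv : v ∈ unitDisc) :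
    dD z v ≤ dD z w + dD w v := by
  rw [dD_eq_half_dist hz hv, dD_eq_half_dist hz hw, dD_eq_half_dist hw hv, ← add_div]
  gcongr
  exact dist_triangle _ _ _

lemma norm_mobius_lt_one {z w : ℂ} (hz : z ∈ unitDisc) (hw : w ∈ unitDisc) :
    ‖(z - w) / (1 - conj z * w)‖ < 1 := by
  rw [norm_mobius_eq_tanh_half_dist hz hw]; exact Real.tanh_lt_one _

lemma one_sub_conj_mul_ne_zero {z w : ℂ} (hz : z ∈ unitDisc) (hw : w ∈ unitDisc) :
    1 - conj z * w ≠ 0 := by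
  refine sub_ne_zero.2 fun h => ?_
  have : ‖conj z * w‖ < 1 := by
    rw [norm_mul, norm_conj]
    exact mul_lt_one_of_nonneg_of_lt_one_left (norm_nonneg z) hz hw.le
  rw [← h, norm_one] at this
  exact this.false

lemma dD_le_arctanh_norm {G : ℂ → ℂ} (hG : DifferentiableOn ℂ G unitDisc)
    (hmaps : MapsTo G unitDisc unitDisc) {u : ℂ} (hu : u ∈ unitDisc) :
    dD (G 0) (G u) ≤ arctanh ‖u‖ := by
  have h0 : (0 : ℂ) ∈ unitDisc := by simp [unitDisc]
  set g : ℂ → ℂ := fun v => (G 0 - G v) / (1 - conj (G 0) * G v)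
  have hg : DifferentiableOn ℂ g (ball 0 1) := by
    rw [← unitDisc_eq_ball]
    intro v hv
    exact ((differentiableWithinAt_const _).sub (hG v hv)).div
      ((differentiableWithinAt_const _).sub ((differentiableWithinAt_const _).mul (hG v hv)))
      (one_sub_conj_mul_ne_zero (hmaps h0) (hmaps hv))
  have hg_maps : MapsTo g (ball 0 1) (closedBall 0 1) := by
    rw [← unitDisc_eq_ball]
    intro v hv
    simpa [g] using (norm_mobius_lt_one (hmaps h0) (hmaps hv)).le
  have hg0 : g 0 = 0 := by simp [g]
  exact arctanh_le_arctanh (norm_nonneg _)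
    (Complex.norm_le_norm_of_mapsTo_ball hg hg_maps hg0 hu) hu

section InverseFunction

variable {f : ℂ → ℂ} {U : Set ℂ} {w : ℂ}

lemma not_eventually_eq_of_injOn (hU : IsOpen U) (hinj : InjOn f U) (hw : w ∈ U) :
    ¬ ∀ᶠ z in 𝓝 w, f z = f w := by
  intro h
  obtain ⟨z, ⟨hfz, hzU⟩, hzw⟩ := ((eventually_nhdsWithin_of_eventually_nhds (s := {w}ᶜ)
    (h.and (hU.eventually_mem hw))).and self_mem_nhdsWithin).exists
  exact hzw (hinj hzU hw hfz)

variable (hU : IsOpen U) (hf : DifferentiableOn ℂ f U) (hinj : InjOn f U) (hw : w ∈ U)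
include hU hf hinj hw

lemma nhds_le_map_nhds_of_injOn : 𝓝 (f w) ≤ map f (𝓝 w) :=
  (hf.analyticAt (hU.mem_nhds hw)).eventually_constant_or_nhds_le_map_nhds_aux.resolve_left
    (not_eventually_eq_of_injOn hU hinj hw)

lemma continuousAt_invFunOn_of_injOn : ContinuousAt (invFunOn f U) (f w) := by
  have hleft := hinj.leftInvOn_invFunOn
  rw [ContinuousAt, hleft hw]
  intro s hs
  have himage : f '' (s ∩ U) ∈ 𝓝 (f w) :=
    nhds_le_map_nhds_of_injOn hU hf hinj hw (image_mem_map (inter_mem hs (hU.mem_nhds hw)))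
  refine mem_map.2 (mem_of_superset himage ?_)
  rintro _ ⟨v, ⟨hvs, hvU⟩, rfl⟩
  simpa [hleft hvU] using hvs

lemma differentiableAt_invFunOn_of_deriv_ne_zero (hder : deriv f w ≠ 0) :
    DifferentiableAt ℂ (invFunOn f U) (f w) := by
  have hleft : ∀ᶠ z in 𝓝 w, invFunOn f U (f z) = z := by
    filter_upwards [hU.eventually_mem hw] with z hz using hinj.leftInvOn_invFunOn hz
  exact ((hf.analyticAt (hU.mem_nhds hw)).hasStrictDerivAt.to_local_left_inverse hder
    hleft).hasDerivAt.differentiableAt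

/-- Critical points of `f` are isolated and `invFunOn f U` is continuous, so it is holomorphic
across them by Riemann's removable singularity theorem. -/
lemma differentiableAt_invFunOn_of_injOn : DifferentiableAt ℂ (invFunOn f U) (f w) := by
  rcases ((hf.analyticAt (hU.mem_nhds hw)).deriv).eventually_eq_zero_or_eventually_ne_zero with
    hzero | hne
  · exfalso
    obtain ⟨ε, hε, hball⟩ :=
      Metric.eventually_nhds_iff_ball.mp (hzero.and (hU.eventually_mem hw))
    refine not_eventually_eq_of_injOn hU hinj hw ?_
    filter_upwards [ball_mem_nhds w hε] with z hz
    exact isOpen_ball.is_const_of_deriv_eq_zero (convex_ball w ε).isPreconnected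
      (hf.mono fun v hv => (hball v hv).2) (fun v hv => (hball v hv).1)
      hz (mem_ball_self hε)
  · obtain ⟨V, hV, hVne⟩ := (eventually_nhdsWithin_iff.mp hne).and (hU.eventually_mem hw)
      |>.exists_mem
    have hS : f '' V ∈ 𝓝 (f w) := nhds_le_map_nhds_of_injOn hU hf hinj hw (image_mem_map hV)
    have hdiff : DifferentiableOn ℂ (invFunOn f U) (f '' V \ {f w}) := by
      rintro _ ⟨⟨v, hvV, rfl⟩, hvw⟩
      have hvU := (hVne v hvV).2
      have hder := (hVne v hvV).1 fun h => hvw (by rw [h]; rfl)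
      exact (differentiableAt_invFunOn_of_deriv_ne_zero hU hf hinj hvU hder).differentiableWithinAt
    exact ((differentiableOn_compl_singleton_and_continuousAt_iff hS).mp
      ⟨hdiff, continuousAt_invFunOn_of_injOn hU hf hinj hw⟩).differentiableAt hS

end InverseFunction

lemma abs_lt_sqrt_sq_add {t y : ℝ} (hy : y ≠ 0) : |t| < √(t ^ 2 + (2 * y) ^ 2) := by
  rw [Real.lt_sqrt (abs_nonneg t), sq_abs]
  have := pow_pos (abs_pos.2 hy) 2
  nlinarith [sq_abs y]

lemma arctanh_abs_div_sqrt_le (t : ℝ) {y : ℝ} (hy : y ≠ 0) :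
    arctanh (|t| / √(t ^ 2 + (2 * y) ^ 2)) ≤ Real.log (1 + |t| / |y|) := by
  set s := √(t ^ 2 + (2 * y) ^ 2)
  have hts : |t| < s := abs_lt_sqrt_sq_add hy
  have hs_le : s ≤ |t| + 2 * |y| := by
    rw [Real.sqrt_le_left (by positivity)]
    nlinarith [sq_abs t, sq_abs y, abs_nonneg t, abs_nonneg y]
  have hs2 : s ^ 2 = |t| ^ 2 + 4 * |y| ^ 2 := by
    rw [Real.sq_sqrt (by positivity), sq_abs, sq_abs]; ring
  have hy' : 0 < |y| := abs_pos.2 hy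
  have hs : 0 < s := (abs_nonneg t).trans_lt hts
  have hratio : (1 + |t| / s) / (1 - |t| / s) ≤ (1 + |t| / |y|) ^ 2 := by
    rw [div_le_iff₀ (by rw [sub_pos, div_lt_one hs]; exact hts)]
    field_simp
    -- multiplied by `s + |t|`, the inequality becomes `(s + |t|) ^ 2 ≤ (2 * |t| + 2 * |y|) ^ 2`
    have hkey : (s + |t|) * ((|y| + |t|) ^ 2 * (s - |t|) - (s + |t|) * |y| ^ 2) =
        |y| ^ 2 * ((2 * |y| + 2 * |t|) ^ 2 - (s + |t|) ^ 2) := by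
      linear_combination (|y| + |t|) ^ 2 * hs2
    have hnonneg : 0 ≤ |y| ^ 2 * ((2 * |y| + 2 * |t|) ^ 2 - (s + |t|) ^ 2) :=
      mul_nonneg (sq_nonneg _) (sub_nonneg.2 (pow_le_pow_left₀ (by positivity) (by linarith) 2))
    rw [← hkey] at hnonneg
    linarith [nonneg_of_mul_nonneg_right hnonneg (by positivity : (0:ℝ) < s + |t|)]
  calc arctanh (|t| / s) ≤ 1 / 2 * Real.log ((1 + |t| / |y|) ^ 2) := by
        unfold arctanh
        gcongr
        exact div_pos (by positivity) (by rw [sub_pos, div_lt_one hs]; exact hts)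
    _ = Real.log (1 + |t| / |y|) := by rw [Real.log_pow]; ring

lemma norm_ofReal_div_add_mul_I (t y : ℝ) :
    ‖(t : ℂ) / (t + (2 * y : ℝ) * I)‖ = |t| / √(t ^ 2 + (2 * y) ^ 2) := by
  rw [norm_div, norm_real, norm_add_mul_I, Real.norm_eq_abs]

lemma im_sub_ne_zero_of_mem {a : ℝ} {H : Set ℂ} (hH : H = {w | a < w.im} ∨ H = {w | w.im < a})
    {w : ℂ} (hw : w ∈ H) : w.im - a ≠ 0 := by
  rcases hH with rfl | rfl
  · exact sub_ne_zero.2 (ne_of_gt hw)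
  · exact sub_ne_zero.2 (ne_of_lt hw)

/-- Schwarz–Pick for `h⁻¹ ∘ halfPlaneCayley (h z) y`, which sends `0 ↦ z` and
`t / (t + 2 y I) ↦ w`. -/
lemma dD_le_log_of_image_eq_halfPlane {h : ℂ → ℂ} {Δ : Set ℂ} {a : ℝ} (hΔ : IsOpen Δ)
    (hΔD : Δ ⊆ unitDisc) (hh : DifferentiableOn ℂ h Δ) (hinj : InjOn h Δ)
    (hH : h '' Δ = {w | a < w.im} ∨ h '' Δ = {w | w.im < a}) {z w : ℂ} (hz : z ∈ Δ) (hw : w ∈ Δ)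
    (t : ℝ) (hzw : h w = h z + t) :
    dD z w ≤ Real.log (1 + |t| / |(h z).im - a|) := by
  set y := (h z).im - a
  have hy : y ≠ 0 := im_sub_ne_zero_of_mem hH ⟨z, hz, rfl⟩
  have hmem : ∀ u ∈ unitDisc, halfPlaneCayley (h z) y u ∈ h '' Δ := fun u hu =>
    halfPlaneCayley_mem hH ⟨z, hz, rfl⟩ hu
  set G : ℂ → ℂ := fun u => invFunOn h Δ (halfPlaneCayley (h z) y u)
  have hG : DifferentiableOn ℂ G unitDisc := by
    intro u hu
    obtain ⟨v, hv, hvu⟩ := hmem u hu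
    have hinv := differentiableAt_invFunOn_of_injOn hΔ hh hinj hv
    rw [hvu] at hinv
    exact (hinv.comp u (differentiableAt_halfPlaneCayley _ _ (ne_one_of_mem_unitDisc hu)))
      |>.differentiableWithinAt
  have hG_maps : MapsTo G unitDisc unitDisc := fun u hu => hΔD (invFunOn_mem (hmem u hu))
  set u : ℂ := t / (t + (2 * y : ℝ) * I)
  have hu : u ∈ unitDisc := by
    show ‖u‖ < 1
    rw [norm_ofReal_div_add_mul_I, div_lt_one ((abs_nonneg t).trans_lt (abs_lt_sqrt_sq_add hy))]
    exact abs_lt_sqrt_sq_add hy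
  have hG0 : G 0 = z := by
    simp only [G, halfPlaneCayley_zero, hinj.leftInvOn_invFunOn hz]
  have hGu : G u = w := by
    simp only [G, u, halfPlaneCayley_div _ hy, ← hzw, hinj.leftInvOn_invFunOn hw]
  calc dD z w = dD (G 0) (G u) := by rw [hG0, hGu]
    _ ≤ arctanh ‖u‖ := dD_le_arctanh_norm hG hG_maps hu
    _ ≤ Real.log (1 + |t| / |y|) := by
      rw [norm_ofReal_div_add_mul_I]; exact arctanh_abs_div_sqrt_le t hy

lemma backwardInvSet_subset_unitDisc {φ : ℝ → ℂ → ℂ} (h0 : ∀ z ∈ unitDisc, φ 0 z = z) :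
    backwardInvSet φ ⊆ unitDisc := by
  intro x hx
  obtain ⟨x', hx', rfl⟩ := mem_iInter₂.mp hx 0 self_mem_Ici
  rwa [h0 x' hx']

lemma IsPetal.isOpen {φ : ℝ → ℂ → ℂ} {Δ : Set ℂ} (hΔ : IsPetal φ Δ) : IsOpen Δ := by
  obtain ⟨-, z, -, rfl⟩ := hΔ
  exact isOpen_interior.connectedComponentIn

lemma IsPetal.subset_unitDisc {φ : ℝ → ℂ → ℂ} {Δ : Set ℂ} (hΔ : IsPetal φ Δ)
    (h0 : ∀ z ∈ unitDisc, φ 0 z = z) : Δ ⊆ unitDisc := by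
  obtain ⟨-, z, -, rfl⟩ := hΔ
  exact (connectedComponentIn_subset _ _).trans
    (interior_subset.trans (backwardInvSet_subset_unitDisc h0))

section GeodesicDistance

variable {η : ℝ → ℂ} {u : ℂ}

lemma bddBelow_range_dD (hη : ∀ r ∈ Ioo (-1 : ℝ) 1, η r ∈ unitDisc) (hu : u ∈ unitDisc) :
    BddBelow (range fun r : Ioo (-1 : ℝ) 1 => dD u (η r)) :=
  ⟨0, by rintro _ ⟨r, rfl⟩; exact dD_nonneg hu (hη r r.2)⟩

lemma geoDist_nonneg (hη : ∀ r ∈ Ioo (-1 : ℝ) 1, η r ∈ unitDisc) (hu : u ∈ unitDisc) :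
    0 ≤ geoDist η u :=
  have : Nonempty (Ioo (-1 : ℝ) 1) := ⟨⟨0, by norm_num, by norm_num⟩⟩
  le_ciInf fun r => dD_nonneg hu (hη r r.2)

lemma geoDist_le_dD (hη : ∀ r ∈ Ioo (-1 : ℝ) 1, η r ∈ unitDisc) (hu : u ∈ unitDisc) {r : ℝ}
    (hr : r ∈ Ioo (-1 : ℝ) 1) : geoDist η u ≤ dD u (η r) :=
  ciInf_le (bddBelow_range_dD hη hu) ⟨r, hr⟩

end GeodesicDistance

lemma tendsto_div_atBot_of_le_log {v : ℝ → ℝ} (C : ℝ) {c : ℝ} (hc : 0 < c)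
    (hv : ∀ᶠ t in atBot, 0 ≤ v t ∧ v t ≤ C * Real.log (1 + |t| / c)) :
    Tendsto (fun t => v t / t) atBot (𝓝 0) := by
  have hg : Tendsto (fun t : ℝ => 1 + |t| / c) atBot atTop :=
    tendsto_atTop_add_const_left _ 1 (tendsto_abs_atBot_atTop.atTop_div_const hc)
  have hg_le : (fun t : ℝ => 1 + |t| / c) =O[atBot] id := by
    refine IsBigO.of_bound (1 + 1 / c) ?_
    filter_upwards [eventually_le_atBot (-1)] with t ht
    have h1 : 1 ≤ |t| := by rw [abs_of_neg (by linarith)]; linarith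
    rw [Real.norm_of_nonneg (by positivity), id, Real.norm_eq_abs, add_mul, one_mul,
      div_mul_eq_mul_div, one_mul]
    linarith
  have hlog : (fun t => Real.log (1 + |t| / c)) =o[atBot] id :=
    (Real.isLittleO_log_id_atTop.comp_tendsto hg).trans_isBigO hg_le
  have hv_le : v =O[atBot] fun t => Real.log (1 + |t| / c) := by
    refine IsBigO.of_bound C ?_
    filter_upwards [hv] with t ⟨h0, hle⟩
    have : 0 ≤ Real.log (1 + |t| / c) := Real.log_nonneg (by simp; positivity)
    rwa [Real.norm_of_nonneg h0, Real.norm_of_nonneg this]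
  exact (hv_le.trans_isLittleO hlog).tendsto_div_nhds_zero

theorem stmt10_general (φ : ℝ → ℂ → ℂ) (hφ : IsSemigroupD φ) (h : ℂ → ℂ) (hh : IsKoenigsNE φ h)
    (Δ : Set ℂ) (hpar : IsParabolicPetal φ h Δ)
    (hΔback : ∀ t : ℝ, t ≤ 0 → ∀ z ∈ Δ, φ t z ∈ Δ ∧ h (φ t z) = h z + (t : ℂ))
    (z : ℂ) (hz : z ∈ Δ)
    (η : ℝ → ℂ) (hη : IsGeodesicD η) (hη0 : η 0 = z)
    (P : ℝ → ℂ) (hP : ∀ t : ℝ, t ≤ 0 → IsProj η (φ t z) (P t)) :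
    Filter.Tendsto (fun t => dD z (P t) / t) Filter.atBot (nhds 0) ∧
    Filter.Tendsto (fun t => geoDist η (φ t z) / t) Filter.atBot (nhds 0) := by
  obtain ⟨hpetal, ⟨a, hH⟩, -, -⟩ := hpar
  have hΔD := hpetal.subset_unitDisc hφ.id0
  have hzD := hΔD hz
  have hc : 0 < |(h z).im - a| := abs_pos.2 (im_sub_ne_zero_of_mem hH ⟨z, hz, rfl⟩)
  have horbit : ∀ t ≤ 0, φ t z ∈ unitDisc ∧ dD z (φ t z) ≤ Real.log (1 + |t| / |(h z).im - a|) := by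
    intro t ht
    obtain ⟨hmem, himg⟩ := hΔback t ht z hz
    exact ⟨hΔD hmem, dD_le_log_of_image_eq_halfPlane hpetal.isOpen hΔD (hh.holo.mono hΔD)
      (hh.inj.mono hΔD) hH hz hmem t himg⟩
  have hgeo : ∀ t ≤ 0, 0 ≤ geoDist η (φ t z) ∧ geoDist η (φ t z) ≤ dD z (φ t z) := fun t ht =>
    ⟨geoDist_nonneg hη.mem (horbit t ht).1, by
      simpa [hη0, dD_comm (horbit t ht).1 hzD] using
        geoDist_le_dD hη.mem (horbit t ht).1 (r := 0) (by norm_num)⟩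
  constructor
  · refine tendsto_div_atBot_of_le_log 2 hc ?_
    filter_upwards [eventually_le_atBot 0] with t ht
    obtain ⟨⟨r, hr, hPr⟩, hPd⟩ := hP t ht
    have hPD : P t ∈ unitDisc := hPr ▸ hη.mem r hr
    refine ⟨dD_nonneg hzD hPD, ?_⟩
    calc dD z (P t) ≤ dD z (φ t z) + geoDist η (φ t z) :=
          hPd ▸ dD_triangle hzD (horbit t ht).1 hPD
      _ ≤ 2 * Real.log (1 + |t| / |(h z).im - a|) := by linarith [hgeo t ht, horbit t ht]
  · refine tendsto_div_atBot_of_le_log 1 hc ?_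
    filter_upwards [eventually_le_atBot 0] with t ht
    exact ⟨(hgeo t ht).1, by linarith [hgeo t ht, horbit t ht]⟩

/-- Corollary 5.4 (ii): for a parabolic petal,
`lim_{t → -∞} v^o_Δ(t)/t = 0` and `lim_{t → -∞} v^T_Δ(t)/t = 0`. -/
theorem stmt10 (φ : ℝ → ℂ → ℂ) (hφ : IsSemigroupD φ) (τ : ℂ)
    (hτ : IsDenjoyWolffBoundary φ τ) (h : ℂ → ℂ) (hh : IsKoenigsNE φ h)
    (Δ : Set ℂ) (hpar : IsParabolicPetal φ h Δ)
    (hΔbij : ∀ t : ℝ, 0 ≤ t → Set.BijOn (φ t) Δ Δ)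
    (hΔback : ∀ t : ℝ, t ≤ 0 → ∀ z ∈ Δ, φ t z ∈ Δ ∧ h (φ t z) = h z + (t : ℂ))
    (z : ℂ) (hz : z ∈ Δ)
    (η : ℝ → ℂ) (hη : IsGeodesicD η) (hη0 : η 0 = z)
    (hη1 : Filter.Tendsto η (nhdsWithin 1 (Set.Iio 1)) (nhds τ))
    (P : ℝ → ℂ) (hP : ∀ t : ℝ, t ≤ 0 → IsProj η (φ t z) (P t)) :
    Filter.Tendsto (fun t => dD z (P t) / t) Filter.atBot (nhds 0) ∧
    Filter.Tendsto (fun t => geoDist η (φ t z) / t) Filter.atBot (nhds 0) :=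
  stmt10_general φ hφ h hh Δ hpar hΔback z hz η hη hη0 P hP
end

section
/- There exist a semigroup (ψ_t) in 𝔻 and a non-regular backward orbit γ : [0, ∞) → 𝔻 of (ψ_t) such that liminf_{s → +∞} d_𝔻(γ(0), γ(s))/s² ≥ 1/4. -/
open Filter Set

/-!
In the coordinate `w = log (1 - z)` the maps `ψ_t z = 1 - (1 - z) ^ exp (-t)` act by
`w ↦ exp (-t) • w`. The image of `𝔻` in this coordinate, `{w | exp w.re < 2 cos w.im}`, is
star-shaped about `0` (concavity of `cos` and of `x ↦ x ^ β`), so every `ψ_t` is a self-map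
of `𝔻`. The real curve `γ t = 1 - exp (-exp t)` is a backward orbit, and since `1 - γ t`
decays doubly exponentially, `d_𝔻(γ t, γ t') ≥ (exp t' - exp t - log 2) / 2` grows
exponentially in `t'`.
-/

open Complex Topology

lemma one_sub_exp_mem_unitDisc_iff (w : ℂ) :
    1 - exp w ∈ unitDisc ↔ Real.exp w.re < 2 * Real.cos w.im := by
  have hsq : ‖1 - exp w‖ ^ 2 = 1 - 2 * (Real.exp w.re * Real.cos w.im) + Real.exp w.re ^ 2 := by
    rw [← exp_re, ← norm_exp, Complex.sq_norm, Complex.sq_norm, normSq_apply, normSq_apply]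
    simp only [sub_re, sub_im, one_re, one_im]
    ring
  have hexp := Real.exp_pos w.re
  show ‖1 - exp w‖ < 1 ↔ _
  rw [← sq_lt_one_iff₀ (norm_nonneg _), hsq]
  constructor <;> intro h <;> nlinarith

lemma zero_lt_re_one_sub {z : ℂ} (hz : z ∈ unitDisc) : 0 < (1 - z).re := by
  have : ‖z‖ < 1 := hz
  simp only [sub_re, one_re]
  linarith [re_le_norm z]

lemma one_sub_mem_slitPlane {z : ℂ} (hz : z ∈ unitDisc) : 1 - z ∈ slitPlane :=
  Or.inl (zero_lt_re_one_sub hz)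

lemma abs_im_log_one_sub_lt {z : ℂ} (hz : z ∈ unitDisc) : |(log (1 - z)).im| < Real.pi / 2 := by
  rw [log_im]
  exact abs_arg_lt_pi_div_two_iff.mpr (Or.inl (zero_lt_re_one_sub hz))

lemma exp_re_log_one_sub_lt {z : ℂ} (hz : z ∈ unitDisc) :
    Real.exp (log (1 - z)).re < 2 * Real.cos (log (1 - z)).im := by
  rw [← one_sub_exp_mem_unitDisc_iff, exp_log (slitPlane_ne_zero (one_sub_mem_slitPlane hz)),
    sub_sub_cancel]
  exact hz

/-- The region `{x + iθ | exp x < 2 cos θ, |θ| ≤ π/2}` is star-shaped about `0`. -/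
lemma exp_mul_lt_two_mul_cos_mul {x θ β : ℝ} (hθ : |θ| ≤ Real.pi / 2)
    (hx : Real.exp x < 2 * Real.cos θ) (hβ0 : 0 < β) (hβ1 : β ≤ 1) :
    Real.exp (β * x) < 2 * Real.cos (β * θ) := by
  have hcos : 0 < Real.cos θ := by linarith [Real.exp_pos x]
  have hθmem : θ ∈ Icc (-(Real.pi / 2)) (Real.pi / 2) := abs_le.mp hθ
  have h0mem : (0 : ℝ) ∈ Icc (-(Real.pi / 2)) (Real.pi / 2) := by
    constructor <;> linarith [Real.pi_pos]
  have hconcave : β * Real.cos θ + (1 - β) ≤ Real.cos (β * θ) := by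
    simpa [Real.cos_zero] using
      strictConcaveOn_cos_Icc.concaveOn.2 hθmem h0mem hβ0.le (by linarith) (by ring)
  calc Real.exp (β * x) = Real.exp x ^ β := by rw [← Real.exp_mul, mul_comm]
    _ < (2 * Real.cos θ) ^ β := Real.rpow_lt_rpow (Real.exp_pos x).le hx hβ0
    _ = (1 + (2 * Real.cos θ - 1)) ^ β := by ring_nf
    _ ≤ 1 + β * (2 * Real.cos θ - 1) :=
      rpow_one_add_le_one_add_mul_self (by linarith) hβ0.le hβ1
    _ ≤ 2 * (β * Real.cos θ + (1 - β)) := by linarith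
    _ ≤ 2 * Real.cos (β * θ) := by linarith

noncomputable def oneSubRpow (β : ℝ) (z : ℂ) : ℂ :=
  1 - exp (β * log (1 - z))

section oneSubRpow

variable {β β' : ℝ} {z : ℂ}

lemma log_one_sub_oneSubRpow (hβ : |β| < 2) (hz : z ∈ unitDisc) :
    log (1 - oneSubRpow β z) = β * log (1 - z) := by
  have him : |((β : ℂ) * log (1 - z)).im| < Real.pi := by
    rw [im_ofReal_mul, abs_mul]
    calc |β| * |(log (1 - z)).im| < 2 * (Real.pi / 2) :=
          mul_lt_mul'' hβ (abs_im_log_one_sub_lt hz) (abs_nonneg _) (abs_nonneg _)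
      _ = Real.pi := by ring
  rw [oneSubRpow, sub_sub_cancel]
  exact log_exp (abs_lt.mp him).1 (abs_lt.mp him).2.le

lemma oneSubRpow_one (hz : z ∈ unitDisc) : oneSubRpow 1 z = z := by
  rw [oneSubRpow, ofReal_one, one_mul, exp_log (slitPlane_ne_zero (one_sub_mem_slitPlane hz)),
    sub_sub_cancel]

lemma oneSubRpow_oneSubRpow (hβ' : |β'| < 2) (hz : z ∈ unitDisc) :
    oneSubRpow β (oneSubRpow β' z) = oneSubRpow (β * β') z := by
  rw [oneSubRpow, log_one_sub_oneSubRpow hβ' hz, oneSubRpow, ofReal_mul, mul_assoc]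

lemma oneSubRpow_mem_unitDisc (hβ0 : 0 < β) (hβ1 : β ≤ 1) (hz : z ∈ unitDisc) :
    oneSubRpow β z ∈ unitDisc := by
  rw [oneSubRpow, one_sub_exp_mem_unitDisc_iff, re_ofReal_mul, im_ofReal_mul]
  exact exp_mul_lt_two_mul_cos_mul (abs_im_log_one_sub_lt hz).le (exp_re_log_one_sub_lt hz)
    hβ0 hβ1

lemma differentiableOn_oneSubRpow : DifferentiableOn ℂ (oneSubRpow β) unitDisc := fun z hz =>
  ((differentiableAt_const _).sub (((differentiableAt_log
    (one_sub_mem_slitPlane hz)).comp z ((differentiableAt_const _).sub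
      differentiableAt_id)).const_mul _).cexp).differentiableWithinAt

lemma continuousOn_oneSubRpow_uncurry :
    ContinuousOn (fun p : ℝ × ℂ => oneSubRpow p.1 p.2) (univ ×ˢ unitDisc) := by
  rintro ⟨β, z⟩ ⟨-, hz⟩
  have hlog : ContinuousAt (fun p : ℝ × ℂ => log (1 - p.2)) (β, z) :=
    ContinuousAt.clog (by fun_prop) (one_sub_mem_slitPlane hz)
  exact (continuousAt_const.sub ((continuous_ofReal.comp continuous_fst).continuousAt.mul
    hlog).cexp).continuousWithinAt

/-- The image of `oneSubRpow β` misses `1 - exp (iπ/4)`, since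
`|arg (1 - oneSubRpow β z)| < |β| π / 2 ≤ π / 4`. -/
lemma not_surjOn_oneSubRpow (hβ : |β| ≤ 1 / 2) : ¬ SurjOn (oneSubRpow β) unitDisc unitDisc := by
  set w : ℂ := (Real.pi / 4 : ℝ) * I
  have hw_re : w.re = 0 := by simp [w]
  have hw_im : w.im = Real.pi / 4 := by simp [w]
  have hπ := Real.pi_pos
  have hmem : 1 - exp w ∈ unitDisc := by
    rw [one_sub_exp_mem_unitDisc_iff, hw_re, hw_im, Real.exp_zero, Real.cos_pi_div_four]
    nlinarith [Real.sq_sqrt (show (0 : ℝ) ≤ 2 by norm_num), Real.sqrt_nonneg 2]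
  intro hsurj
  obtain ⟨z, hz, hzw⟩ := hsurj hmem
  have him : |((β : ℂ) * log (1 - z)).im| < Real.pi / 4 := by
    rw [im_ofReal_mul, abs_mul]
    calc |β| * |(log (1 - z)).im| ≤ 1 / 2 * |(log (1 - z)).im| := by gcongr
      _ < Real.pi / 4 := by linarith [abs_im_log_one_sub_lt hz]
  have hexp : exp ((β : ℂ) * log (1 - z)) = exp w := by
    simpa only [oneSubRpow, sub_right_inj] using hzw
  have heq := exp_inj_of_neg_pi_lt_of_le_pi (by linarith [(abs_lt.mp him).1])
    (by linarith [(abs_lt.mp him).2]) (by linarith) (by linarith) hexp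
  rw [heq, hw_im, abs_of_pos (by positivity)] at him
  exact lt_irrefl _ him

end oneSubRpow

lemma tendstoLocallyUniformlyOn_of_continuousOn_prod {α β γ : Type*} [UniformSpace α]
    [LocallyCompactSpace α] [UniformSpace β] [LocallyCompactSpace β] [UniformSpace γ]
    {F : α → β → γ} {s : Set β} (hs : IsOpen s) (hF : ContinuousOn ↿F (univ ×ˢ s)) {x : α}
    {p : Filter α} (hp : p ≤ 𝓝 x) : TendstoLocallyUniformlyOn F (F x) p s := by
  refine (tendstoLocallyUniformlyOn_iff_forall_isCompact hs).2 fun K hKs hK => ?_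
  obtain ⟨U, hUc, hUx⟩ := exists_compact_mem_nhds x
  have hUK : UniformContinuousOn ↿F (U ×ˢ K) :=
    (hUc.prod hK).uniformContinuousOn_of_continuous (hF.mono (prod_mono (subset_univ U) hKs))
  have h := hUK.tendstoUniformlyOn (mem_of_mem_nhds hUx)
  rw [nhdsWithin_eq_nhds.2 hUx] at h
  exact fun u hu => (h u hu).filter_mono hp

noncomputable def powSemigroup (t : ℝ) : ℂ → ℂ :=
  oneSubRpow (Real.exp (-t))

lemma powSemigroup_zero {z : ℂ} (hz : z ∈ unitDisc) : powSemigroup 0 z = z := by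
  rw [powSemigroup, neg_zero, Real.exp_zero, oneSubRpow_one hz]

lemma isOpen_unitDisc : IsOpen unitDisc := isOpen_lt continuous_norm continuous_const

lemma isSemigroupD_powSemigroup : IsSemigroupD powSemigroup where
  mapsTo _ ht _ hz :=
    oneSubRpow_mem_unitDisc (Real.exp_pos _) (Real.exp_le_one_iff.mpr (neg_nonpos.mpr ht)) hz
  holo _ _ := differentiableOn_oneSubRpow
  id0 _ hz := powSemigroup_zero hz
  comp s t _ ht _ hz := by
    have hβ : |Real.exp (-t)| < 2 := by
      rw [abs_of_pos (Real.exp_pos _)]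
      linarith [Real.exp_le_one_iff.mpr (neg_nonpos.mpr ht)]
    rw [powSemigroup, powSemigroup, powSemigroup, oneSubRpow_oneSubRpow hβ hz, ← Real.exp_add,
      neg_add]
  cont0 :=
    (tendstoLocallyUniformlyOn_of_continuousOn_prod isOpen_unitDisc
      (continuousOn_oneSubRpow_uncurry.comp
        (by fun_prop : Continuous fun p : ℝ × ℂ => (Real.exp (-p.1), p.2)).continuousOn
        fun p hp => ⟨mem_univ _, hp.2⟩) nhdsWithin_le_nhds).congr_right
      fun _ hz => powSemigroup_zero hz
  notGroup := ⟨Real.log 2, Real.log_pos one_lt_two, fun hbij => not_surjOn_oneSubRpow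
    (by rw [Real.exp_neg, Real.exp_log two_pos]; norm_num) hbij.surjOn⟩

noncomputable def backwardOrbit (t : ℝ) : ℝ :=
  1 - Real.exp (-Real.exp t)

lemma backwardOrbit_pos (t : ℝ) : 0 < backwardOrbit t := by
  rw [backwardOrbit, sub_pos, Real.exp_lt_one_iff, neg_lt_zero]
  exact Real.exp_pos t

lemma backwardOrbit_lt_one (t : ℝ) : backwardOrbit t < 1 := by
  rw [backwardOrbit, sub_lt_self_iff]
  exact Real.exp_pos _

lemma backwardOrbit_mono : Monotone backwardOrbit := fun _ _ hst => by
  rw [backwardOrbit, backwardOrbit, sub_le_sub_iff_left, Real.exp_le_exp, neg_le_neg_iff,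
    Real.exp_le_exp]
  exact hst

lemma continuous_backwardOrbit : Continuous backwardOrbit := by
  unfold backwardOrbit
  fun_prop

lemma ofReal_backwardOrbit_mem_unitDisc (t : ℝ) : (backwardOrbit t : ℂ) ∈ unitDisc := by
  show ‖(backwardOrbit t : ℂ)‖ < 1
  rw [norm_real, Real.norm_of_nonneg (backwardOrbit_pos t).le]
  exact backwardOrbit_lt_one t

lemma powSemigroup_backwardOrbit (s t : ℝ) :
    powSemigroup s (backwardOrbit t) = backwardOrbit (t - s) := by
  have hlog : log (1 - (backwardOrbit t : ℂ)) = (-Real.exp t : ℝ) := by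
    rw [backwardOrbit, ofReal_sub, ofReal_one, sub_sub_cancel, ← ofReal_log (Real.exp_pos _).le,
      Real.log_exp]
  have hexp : Real.exp (-s) * -Real.exp t = -Real.exp (t - s) := by
    rw [sub_eq_neg_add, Real.exp_add]
    ring
  rw [powSemigroup, oneSubRpow, hlog, ← ofReal_mul, hexp, ← ofReal_exp, backwardOrbit, ofReal_sub,
    ofReal_one]

lemma dD_ofReal_eq {a b : ℝ} (h0 : 0 ≤ a) (hab : a ≤ b) (hb : b < 1) :
    dD a b = Real.log ((1 - a) * (1 + b) / ((1 + a) * (1 - b))) / 2 := by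
  have hd : 0 < 1 - a * b := by nlinarith
  have hquot : ((a : ℂ) - b) / (1 - (starRingEnd ℂ) a * b) = ((a - b) / (1 - a * b) : ℝ) := by
    rw [conj_ofReal]
    push_cast
    ring
  rw [dD, hquot, norm_real, Real.norm_eq_abs, abs_div, abs_of_pos hd,
    abs_of_nonpos (by linarith : a - b ≤ 0), arctanh]
  field_simp
  ring_nf

lemma log_div_two_le_dD_ofReal {a b : ℝ} (h0 : 0 ≤ a) (hab : a ≤ b) (hb : b < 1) :
    Real.log ((1 - a) / (2 * (1 - b))) / 2 ≤ dD a b := by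
  rw [dD_ofReal_eq h0 hab hb]
  have ha : 0 < 1 - a := by linarith
  have hb' : 0 < 1 - b := by linarith
  have hle : (1 - a) / (2 * (1 - b)) ≤ (1 - a) * (1 + b) / ((1 + a) * (1 - b)) := by
    rw [div_le_div_iff₀ (by positivity) (by positivity)]
    nlinarith [mul_pos ha hb']
  linarith [Real.log_le_log (by positivity) hle]

lemma dD_backwardOrbit_ge {t t' : ℝ} (htt' : t ≤ t') :
    (Real.exp t' - Real.exp t - Real.log 2) / 2 ≤ dD (backwardOrbit t) (backwardOrbit t') := by
  have hlog : Real.log ((1 - backwardOrbit t) / (2 * (1 - backwardOrbit t'))) =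
      Real.exp t' - Real.exp t - Real.log 2 := by
    rw [backwardOrbit, backwardOrbit, sub_sub_cancel, sub_sub_cancel,
      Real.log_div (Real.exp_pos _).ne' (by positivity),
      Real.log_mul two_ne_zero (Real.exp_pos _).ne', Real.log_exp, Real.log_exp]
    ring
  rw [← hlog]
  exact log_div_two_le_dD_ofReal (backwardOrbit_pos t).le (backwardOrbit_mono htt')
    (backwardOrbit_lt_one t')

lemma tendsto_dD_backwardOrbit_add_one :
    Tendsto (fun t => dD (backwardOrbit t) (backwardOrbit (t + 1))) atTop atTop := by
  have hc : 0 < (Real.exp 1 - 1) / 2 := by linarith [Real.add_one_le_exp 1]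
  refine tendsto_atTop_mono (fun t => ?_) (tendsto_atTop_add_const_right _ (-(Real.log 2 / 2))
    (Real.tendsto_exp_atTop.atTop_mul_const hc))
  calc Real.exp t * ((Real.exp 1 - 1) / 2) + -(Real.log 2 / 2)
      = (Real.exp (t + 1) - Real.exp t - Real.log 2) / 2 := by rw [Real.exp_add]; ring
    _ ≤ _ := dD_backwardOrbit_ge (by linarith)

lemma tendsto_dD_backwardOrbit_div_sq :
    Tendsto (fun s => dD (backwardOrbit 0) (backwardOrbit s) / s ^ 2) atTop atTop := by
  refine tendsto_atTop_mono' _ ((eventually_ge_atTop 1).mono fun s hs => ?_)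
    (tendsto_atTop_add_const_right _ (-1) ((Real.tendsto_exp_div_pow_atTop 2).atTop_div_const
      two_pos))
  have hs2 : 0 < s ^ 2 := by positivity
  have hlog2 : Real.log 2 < 1 := by linarith [Real.log_two_lt_d9]
  have hsmall : (1 + Real.log 2) / (2 * s ^ 2) ≤ 1 := (div_le_one (by positivity)).2 (by nlinarith)
  calc Real.exp s / s ^ 2 / 2 + -1
      ≤ Real.exp s / s ^ 2 / 2 - (1 + Real.log 2) / (2 * s ^ 2) := by linarith
    _ = (Real.exp s - Real.exp 0 - Real.log 2) / 2 / s ^ 2 := by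
        rw [Real.exp_zero]; field_simp; ring
    _ ≤ _ := div_le_div_of_nonneg_right (dD_backwardOrbit_ge (by linarith)) hs2.le

/-- Proposition 6.1, second part: there exist a semigroup and a non-regular backward
orbit `γ` with `liminf_{s → +∞} d_𝔻(γ(0), γ(s))/s² ≥ 1/4`. -/
theorem stmt12 : ∃ (ψ : ℝ → ℂ → ℂ) (γ : ℝ → ℂ),
    IsSemigroupD ψ ∧
    ContinuousOn γ (Set.Ici (0 : ℝ)) ∧
    (∀ t : ℝ, 0 ≤ t → γ t ∈ unitDisc) ∧
    (∀ s t : ℝ, 0 ≤ s → s ≤ t → ψ s (γ t) = γ (t - s)) ∧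
    (∀ C : ℝ, ∃ᶠ t in Filter.atTop, C < dD (γ t) (γ (t + 1))) ∧
    ((1 / 4 : ℝ) : EReal) ≤
      Filter.liminf (fun s : ℝ => ((dD (γ 0) (γ s) / s ^ 2 : ℝ) : EReal))
        Filter.atTop := by
  refine ⟨powSemigroup, fun t => backwardOrbit t, isSemigroupD_powSemigroup,
    (continuous_ofReal.comp continuous_backwardOrbit).continuousOn,
    fun t _ => ofReal_backwardOrbit_mem_unitDisc t, fun s t _ _ => powSemigroup_backwardOrbit s t,
    fun C => (tendsto_dD_backwardOrbit_add_one.eventually_gt_atTop C).frequently, ?_⟩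
  exact le_liminf_of_le (by isBoundedDefault)
    ((tendsto_dD_backwardOrbit_div_sq.eventually_ge_atTop (1 / 4)).mono fun _ h => EReal.coe_le_coe h)
end
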